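/- Let A be a nonnegatively graded connected k-algebra and f : M → M' a degree-preserving A-linear morphism of ℤ-graded left A-modules. (i) If M' is bounded below and f is surjective and essential, then 1_k ⊗_A f : k ⊗_A M → k ⊗_A M' is bijective; if moreover M is also bounded below, the converse holds: if 1_k ⊗_A f is bijective then f is surjective and essential. -/

import Mathlib

/-!
STATEMENT 1 (Lemma `lem:biyectiontensor` (i)): for a degree-preserving `A`-linear map
`f : M → M'` of `ℤ`-graded modules over a nonnegatively graded connected `k`-algebra `A`,
if `M'` is bounded below and `f` is surjective and essential then `1_k ⊗_A f` is
bijective; if moreover `M` is bounded below, the converse holds.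

Here `k ⊗_A X` is identified with `X/(A_{>0}·X)`, so the bijectivity of `1_k ⊗_A f`
is expressed as: the induced map `M/(A_{>0}M) → M'/(A_{>0}M')` is bijective, i.e.
`f⁻¹(A_{>0}M') = A_{>0}M` (injectivity) and `A_{>0}M' + f(M) = M'` (surjectivity).
-/

namespace Stmt1

variable {k A : Type} [Field k] [Ring A] [Algebra k A]

/-- The subspace `A_{>0}·X` of a module `X`, for `Apos = A_{>0}`. -/
def posSMul (Apos : Submodule k A) (X : Type) [AddCommGroup X] [Module k X] [Module A X]
    [IsScalarTower k A X] : Submodule k X :=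
  Submodule.span k {x : X | ∃ a ∈ Apos, ∃ x' : X, x = a • x'}

/-- A surjective morphism `f : M → M'` of graded modules is *essential* if every
degree-preserving morphism `g : N → M` of graded `A`-modules such that `f ∘ g` is
surjective is itself surjective. -/
def IsEssential (𝒜 : ℤ → Submodule k A) {M M' : Type}
    [AddCommGroup M] [Module k M] [Module A M] [IsScalarTower k A M]
    [AddCommGroup M'] [Module k M'] [Module A M'] [IsScalarTower k A M']
    (ℳ : ℤ → Submodule k M) (f : M →ₗ[A] M') : Prop :=
  ∀ (N : Type) (_ : AddCommGroup N) (_ : Module k N) (_ : Module A N)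
    (_ : IsScalarTower k A N) (𝒩 : ℤ → Submodule k N)
    (_ : DirectSum.Decomposition 𝒩) (_ : SetLike.GradedSMul 𝒜 𝒩)
    (g : N →ₗ[A] M), (∀ (n : ℤ) (x : N), x ∈ 𝒩 n → g x ∈ ℳ n) →
      Function.Surjective (f ∘ g) → Function.Surjective g

/-!
Write `A₊ = A_{>0}`. For surjective `f` one has `f⁻¹(A₊M') = A₊M + ker f`, so everything hinges on `ker f ⊆ A₊M`.

If `f` is essential and `x ∈ ker f` lies outside `A₊M`, then so does a homogeneous component
`x₀ ∈ M_d` of `x`; choose a linear form `φ` vanishing on `A₊M` with `φ x₀ ≠ 0`. Since `A = k ⊕ A₊`,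
every `k`-subspace containing `A₊M` is an `A`-submodule, so the kernel of `φ` composed with the
degree-`d` projection is a homogeneous submodule. It misses `x₀`, yet it maps onto `M'` because it
has codimension one and `f x₀ = 0`, contradicting essentiality.

Conversely, by the graded Nakayama lemma a homogeneous submodule `S` of a bounded below module `X`
with `A₊X + S = X` is all of `X`. Applied to `im g ⊆ M`, this shows that `f` is essential once
`ker f ⊆ A₊M`; applied to `im f ⊆ M'`, it gives the surjectivity of `f`.
-/

section Projection

variable {X : Type} [AddCommGroup X] [Module k X] (𝒳 : ℤ → Submodule k X)
  [DirectSum.Decomposition 𝒳]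

noncomputable def proj (n : ℤ) : X →ₗ[k] X :=
  (𝒳 n).subtype ∘ₗ DirectSum.component k ℤ (fun i => 𝒳 i) n ∘ₗ
    (DirectSum.decomposeLinearEquiv 𝒳).toLinearMap

theorem proj_apply (n : ℤ) (x : X) : proj 𝒳 n x = (DirectSum.decompose 𝒳 x n : X) := rfl

theorem proj_mem (n : ℤ) (x : X) : proj 𝒳 n x ∈ 𝒳 n := (DirectSum.decompose 𝒳 x n).2

theorem proj_of_mem_same {n : ℤ} {x : X} (hx : x ∈ 𝒳 n) : proj 𝒳 n x = x :=
  DirectSum.decompose_of_mem_same 𝒳 hx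

theorem proj_of_mem_ne {m n : ℤ} {x : X} (hx : x ∈ 𝒳 m) (h : m ≠ n) : proj 𝒳 n x = 0 :=
  DirectSum.decompose_of_mem_ne 𝒳 hx h

theorem exists_proj_notMem {V : Submodule k X} {x : X} (hx : x ∉ V) : ∃ n, proj 𝒳 n x ∉ V := by
  classical
  by_contra! h
  exact hx (DirectSum.sum_support_decompose 𝒳 x ▸ V.sum_mem fun n _ => h n)

theorem proj_map {N : Type} [AddCommGroup N] [Module k N] (𝒩 : ℤ → Submodule k N)
    [DirectSum.Decomposition 𝒩] {F : Type} [FunLike F N X] [AddMonoidHomClass F N X] (g : F)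
    (hg : ∀ (n : ℤ) (z : N), z ∈ 𝒩 n → g z ∈ 𝒳 n) (n : ℤ) (z : N) :
    proj 𝒳 n (g z) = g (proj 𝒩 n z) := by
  induction z using DirectSum.Decomposition.inductionOn 𝒩 with
  | zero => simp
  | @homogeneous j z =>
    by_cases h : j = n
    · subst h
      rw [proj_of_mem_same 𝒳 (hg j z z.2), proj_of_mem_same 𝒩 z.2]
    · rw [proj_of_mem_ne 𝒳 (hg j z z.2) h, proj_of_mem_ne 𝒩 z.2 h, map_zero]
  | add z z' hz hz' => rw [map_add, map_add, hz, hz', map_add, map_add]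

end Projection

section PosSMul

variable {X Y : Type} [AddCommGroup X] [Module k X] [Module A X] [IsScalarTower k A X]
  [AddCommGroup Y] [Module k Y] [Module A Y] [IsScalarTower k A Y]

theorem smul_mem_posSMul {Apos : Submodule k A} {a : A} (ha : a ∈ Apos) (x : X) :
    a • x ∈ posSMul Apos X :=
  Submodule.subset_span ⟨a, ha, x, rfl⟩

theorem map_posSMul_of_surjective (Apos : Submodule k A) {f : X →ₗ[A] Y}
    (hf : Function.Surjective f) :
    (posSMul Apos X).map (f.restrictScalars k) = posSMul Apos Y := by
  rw [posSMul, posSMul, Submodule.map_span]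
  congr 1
  ext y
  constructor
  · rintro ⟨_, ⟨a, ha, x, rfl⟩, rfl⟩
    exact ⟨a, ha, f x, by simp⟩
  · rintro ⟨a, ha, y, rfl⟩
    obtain ⟨x, rfl⟩ := hf y
    exact ⟨a • x, ⟨a, ha, x, rfl⟩, by simp⟩

variable (𝒜 : ℤ → Submodule k A)

theorem mem_iSup_pos {i : ℤ} (hi : 0 < i) {a : A} (ha : a ∈ 𝒜 i) : a ∈ ⨆ n > (0:ℤ), 𝒜 n :=
  Submodule.mem_iSup_of_mem i (Submodule.mem_iSup_of_mem hi ha)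

theorem sub_proj_zero_mem_iSup_pos [DirectSum.Decomposition 𝒜]
    (hneg : ∀ n : ℤ, n < 0 → 𝒜 n = ⊥) (a : A) : a - proj 𝒜 0 a ∈ ⨆ n > (0:ℤ), 𝒜 n := by
  induction a using DirectSum.Decomposition.inductionOn 𝒜 with
  | zero => simp
  | @homogeneous i a =>
    rcases lt_trichotomy i 0 with hi | rfl | hi
    · have ha : (a : A) = 0 := by simpa [hneg i hi] using a.2
      simp [ha]
    · simp [proj_of_mem_same 𝒜 a.2]
    · rw [proj_of_mem_ne 𝒜 a.2 hi.ne', sub_zero]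
      exact mem_iSup_pos 𝒜 hi a.2
  | add a b ha hb => rw [map_add, add_sub_add_comm]; exact add_mem ha hb

theorem smul_mem_of_posSMul_le [DirectSum.Decomposition 𝒜] (hneg : ∀ n : ℤ, n < 0 → 𝒜 n = ⊥)
    (hconn : 𝒜 0 = (1 : Submodule k A)) {V : Submodule k X}
    (hV : posSMul (⨆ n > (0:ℤ), 𝒜 n) X ≤ V) (a : A) {v : X} (hv : v ∈ V) : a • v ∈ V := by
  obtain ⟨c, hc⟩ := Submodule.mem_one.1 (hconn ▸ proj_mem 𝒜 0 a)
  have hsplit : a = algebraMap k A c + (a - proj 𝒜 0 a) := by rw [hc, add_sub_cancel]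
  rw [hsplit, add_smul, algebraMap_smul]
  exact V.add_mem (V.smul_mem c hv)
    (hV (smul_mem_posSMul (sub_proj_zero_mem_iSup_pos 𝒜 hneg a) v))

variable (𝒳 : ℤ → Submodule k X) [DirectSum.Decomposition 𝒳] [SetLike.GradedSMul 𝒜 𝒳]

theorem proj_mem_of_mem_posSMul (n : ℤ) (q : Submodule k X)
    (hq : ∀ i > 0, ∀ a ∈ 𝒜 i, ∀ j, ∀ z ∈ 𝒳 j, i + j = n → a • z ∈ q)
    {x : X} (hx : x ∈ posSMul (⨆ m > (0:ℤ), 𝒜 m) X) : proj 𝒳 n x ∈ q := by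
  have hhom : ∀ i > 0, ∀ a ∈ 𝒜 i, ∀ z : X, proj 𝒳 n (a • z) ∈ q := by
    intro i hi a ha z
    induction z using DirectSum.Decomposition.inductionOn 𝒳 with
    | zero => simp
    | @homogeneous j z =>
      have hmem : a • (z : X) ∈ 𝒳 (i + j) := SetLike.GradedSMul.smul_mem ha z.2
      by_cases hij : i + j = n
      · rw [← hij, proj_of_mem_same 𝒳 hmem]
        exact hq i hi a ha j z z.2 hij
      · rw [proj_of_mem_ne 𝒳 hmem hij]
        exact q.zero_mem
    | add z z' hz hz' => rw [smul_add, map_add]; exact q.add_mem hz hz'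
  induction hx using Submodule.span_induction with
  | zero => simp
  | add y z _ _ hy hz => rw [map_add]; exact q.add_mem hy hz
  | smul c y _ hy => rw [map_smul]; exact q.smul_mem c hy
  | mem y hy =>
    obtain ⟨a, ha, z, rfl⟩ := hy
    refine Submodule.iSup_induction _ (motive := fun a => proj 𝒳 n (a • z) ∈ q) ha
      (fun i a ha => ?_) (by simp)
      (fun a b ha hb => by rw [add_smul, map_add]; exact q.add_mem ha hb)
    by_cases hi : 0 < i
    · rw [iSup_pos hi] at ha
      exact hhom i hi a ha z
    · rw [iSup_neg hi, Submodule.mem_bot] at ha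
      simp [ha]

theorem proj_mem_posSMul (n : ℤ) {x : X} (hx : x ∈ posSMul (⨆ m > (0:ℤ), 𝒜 m) X) :
    proj 𝒳 n x ∈ posSMul (⨆ m > (0:ℤ), 𝒜 m) X :=
  proj_mem_of_mem_posSMul 𝒜 𝒳 n _
    (fun _ hi _ ha _ z _ _ => smul_mem_posSMul (mem_iSup_pos 𝒜 hi ha) z) hx

end PosSMul

section Homogeneous

variable (𝒜 : ℤ → Submodule k A)
variable {X : Type} [AddCommGroup X] [Module k X] [Module A X] [IsScalarTower k A X]
  (𝒳 : ℤ → Submodule k X) [DirectSum.Decomposition 𝒳]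

omit [Algebra k A] [IsScalarTower k A X] in
theorem isHomogeneous_range {N : Type} [AddCommGroup N] [Module k N] [Module A N]
    (𝒩 : ℤ → Submodule k N) [DirectSum.Decomposition 𝒩] (g : N →ₗ[A] X)
    (hg : ∀ (n : ℤ) (z : N), z ∈ 𝒩 n → g z ∈ 𝒳 n) : (LinearMap.range g).IsHomogeneous 𝒳 := by
  rintro n _ ⟨z, rfl⟩
  exact ⟨proj 𝒩 n z, (proj_map 𝒳 𝒩 g hg n z).symm⟩

theorem isInternal_comap_subtype {S : Submodule A X} (hS : S.IsHomogeneous 𝒳) :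
    DirectSum.IsInternal fun n => (𝒳 n).comap (S.subtype.restrictScalars k) := by
  classical
  have hι : Function.Injective (S.subtype.restrictScalars k) := Subtype.val_injective
  rw [DirectSum.isInternal_submodule_iff_iSupIndep_and_iSup_eq_top]
  refine ⟨fun n => ?_, ?_⟩
  · rw [disjoint_iff, ← (Submodule.map_injective_of_injective hι).eq_iff, Submodule.map_inf _ hι,
      Submodule.map_bot, ← disjoint_iff]
    refine ((DirectSum.Decomposition.isInternal 𝒳).submodule_iSupIndep n).mono
      (Submodule.map_comap_le _ _) (Submodule.map_le_iff_le_comap.2 (iSup₂_le fun j hj => ?_))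
    exact Submodule.comap_mono (le_iSup₂ (f := fun j (_ : j ≠ n) => 𝒳 j) j hj)
  · rw [eq_top_iff]
    rintro s -
    have hs : s = ∑ n ∈ (DirectSum.decompose 𝒳 (s : X)).support, ⟨proj 𝒳 n s, hS n s.2⟩ :=
      Subtype.ext (by simpa [proj_apply] using (DirectSum.sum_support_decompose 𝒳 (s : X)).symm)
    rw [hs]
    exact Submodule.sum_mem _ fun n _ => Submodule.mem_iSup_of_mem n (proj_mem 𝒳 n s)

variable [SetLike.GradedSMul 𝒜 𝒳]

theorem mem_of_forall_lt_mem {S : Submodule A X} (hS : S.IsHomogeneous 𝒳)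
    (hsup : posSMul (⨆ n > (0:ℤ), 𝒜 n) X ⊔ S.restrictScalars k = ⊤) {m : ℤ}
    (hlt : ∀ j < m, ∀ z ∈ 𝒳 j, z ∈ S) {x : X} (hx : x ∈ 𝒳 m) : x ∈ S := by
  obtain ⟨p, hp, s, hs, hps⟩ := Submodule.mem_sup.1 (hsup ▸ Submodule.mem_top (x := x))
  rw [← proj_of_mem_same 𝒳 hx, ← hps, map_add]
  refine S.add_mem ?_ (hS m hs)
  exact proj_mem_of_mem_posSMul 𝒜 𝒳 m (S.restrictScalars k)
    (fun i hi a _ j z hz hij => S.smul_mem a (hlt j (by omega) z hz)) hp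

theorem eq_top_of_posSMul_sup_eq_top {n₀ : ℤ} (hbdd : ∀ n : ℤ, n < n₀ → 𝒳 n = ⊥)
    {S : Submodule A X} (hS : S.IsHomogeneous 𝒳)
    (hsup : posSMul (⨆ n > (0:ℤ), 𝒜 n) X ⊔ S.restrictScalars k = ⊤) : S = ⊤ := by
  have hdeg : ∀ j : ℕ, ∀ m < n₀ + j, ∀ x ∈ 𝒳 m, x ∈ S := by
    intro j
    induction j with
    | zero =>
      intro m hm x hx
      rw [hbdd m (by omega), Submodule.mem_bot] at hx
      exact hx ▸ S.zero_mem
    | succ j ih =>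
      intro m hm x hx
      exact mem_of_forall_lt_mem 𝒜 𝒳 hS hsup (fun i hi => ih i (by omega)) hx
  rw [eq_top_iff]
  rintro x -
  induction x using DirectSum.Decomposition.inductionOn 𝒳 with
  | zero => exact S.zero_mem
  | @homogeneous i x => exact hdeg (i + 1 - n₀).toNat i (by omega) x x.2
  | add x y hx hy => exact S.add_mem hx hy

end Homogeneous

section Essential

variable (𝒜 : ℤ → Submodule k A)
variable {X Y : Type} [AddCommGroup X] [Module k X] [Module A X] [IsScalarTower k A X]
  [AddCommGroup Y] [Module k Y] [Module A Y] [IsScalarTower k A Y]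
  (𝒳 : ℤ → Submodule k X) [DirectSum.Decomposition 𝒳] [SetLike.GradedSMul 𝒜 𝒳]

theorem IsEssential.eq_top_of_isHomogeneous {f : X →ₗ[A] Y} (hess : IsEssential 𝒜 𝒳 f)
    {S : Submodule A X} (hS : S.IsHomogeneous 𝒳) (hmap : S.map f = ⊤) : S = ⊤ := by
  let 𝒮 : ℤ → Submodule k S := fun n => (𝒳 n).comap (S.subtype.restrictScalars k)
  have h𝒮 : SetLike.GradedSMul 𝒜 𝒮 :=
    ⟨fun _ _ _ x ha hx => (SetLike.GradedSMul.smul_mem ha (show (x : X) ∈ 𝒳 _ from hx) :)⟩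
  have hsurj : Function.Surjective (f ∘ S.subtype) := by
    intro y
    obtain ⟨s, hs, rfl⟩ := hmap.symm ▸ Submodule.mem_top (x := y)
    exact ⟨⟨s, hs⟩, rfl⟩
  rw [← Submodule.range_subtype S]
  exact LinearMap.range_eq_top.2 <|
    hess S inferInstance inferInstance inferInstance inferInstance 𝒮
      (isInternal_comap_subtype 𝒳 hS).chooseDecomposition h𝒮 S.subtype (fun _ _ hx => hx) hsurj

theorem IsEssential.ker_le_posSMul [DirectSum.Decomposition 𝒜]
    (hneg : ∀ n : ℤ, n < 0 → 𝒜 n = ⊥) (hconn : 𝒜 0 = (1 : Submodule k A))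
    (𝒴 : ℤ → Submodule k Y) [DirectSum.Decomposition 𝒴] {f : X →ₗ[A] Y}
    (hf : ∀ (n : ℤ) (x : X), x ∈ 𝒳 n → f x ∈ 𝒴 n) (hsurj : Function.Surjective f)
    (hess : IsEssential 𝒜 𝒳 f) :
    LinearMap.ker (f.restrictScalars k) ≤ posSMul (⨆ n > (0:ℤ), 𝒜 n) X := by
  intro x hx
  by_contra hxP
  obtain ⟨d, hd⟩ := exists_proj_notMem 𝒳 hxP
  set x₀ := proj 𝒳 d x
  have hx₀ : proj 𝒳 d x₀ = x₀ := proj_of_mem_same 𝒳 (proj_mem 𝒳 d x)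
  have hfx₀ : f x₀ = 0 := by
    rw [← proj_map 𝒴 𝒳 f hf, show f x = 0 from hx, map_zero]
  obtain ⟨φ, hφx₀, hφP⟩ := Submodule.exists_dual_map_eq_bot_of_notMem hd inferInstance
  let V := LinearMap.ker (φ ∘ₗ proj 𝒳 d)
  have hPV : posSMul (⨆ n > (0:ℤ), 𝒜 n) X ≤ V := fun p hp =>
    (Submodule.mem_bot k).1 (hφP ▸ Submodule.mem_map_of_mem (proj_mem_posSMul 𝒜 𝒳 d hp))
  let S : Submodule A X :=
    { V with smul_mem' := fun a _ hv => smul_mem_of_posSMul_le 𝒜 hneg hconn hPV a hv }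
  have hS : S.IsHomogeneous 𝒳 := by
    intro n s hs
    change φ (proj 𝒳 d (proj 𝒳 n s)) = 0
    by_cases h : n = d
    · subst h
      rwa [proj_of_mem_same 𝒳 (proj_mem 𝒳 n s)]
    · rw [proj_of_mem_ne 𝒳 (proj_mem 𝒳 n s) h, map_zero]
  have hmap : S.map f = ⊤ := by
    rw [eq_top_iff]
    rintro y -
    obtain ⟨m, rfl⟩ := hsurj y
    refine ⟨m - (φ (proj 𝒳 d m) / φ x₀) • x₀, ?_, by simp [hfx₀]⟩
    change φ (proj 𝒳 d (m - _)) = 0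
    rw [map_sub, map_smul, hx₀, map_sub, map_smul, smul_eq_mul, div_mul_cancel₀ _ hφx₀, sub_self]
  have hx₀S : x₀ ∈ S := hess.eq_top_of_isHomogeneous 𝒜 𝒳 hS hmap ▸ Submodule.mem_top
  exact hφx₀ (by simpa [S, V, hx₀] using hx₀S)

theorem isEssential_of_ker_le_posSMul {n₀ : ℤ} (hbdd : ∀ n : ℤ, n < n₀ → 𝒳 n = ⊥)
    {f : X →ₗ[A] Y} (hker : LinearMap.ker (f.restrictScalars k) ≤ posSMul (⨆ n > (0:ℤ), 𝒜 n) X) :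
    IsEssential 𝒜 𝒳 f := by
  intro N _ _ _ _ 𝒩 _ _ g hg hfg
  refine LinearMap.range_eq_top.1 <|
    eq_top_of_posSMul_sup_eq_top 𝒜 𝒳 hbdd (isHomogeneous_range 𝒳 𝒩 g hg) (eq_top_iff.2 ?_)
  rintro x -
  obtain ⟨z, hz⟩ := hfg (f x)
  have hxz : x - g z ∈ LinearMap.ker (f.restrictScalars k) := by
    simp only [LinearMap.mem_ker, LinearMap.restrictScalars_apply, map_sub, sub_eq_zero]
    exact hz.symm
  exact Submodule.mem_sup.2 ⟨x - g z, hker hxz, g z, ⟨z, rfl⟩, sub_add_cancel x (g z)⟩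

end Essential

theorem essential_iff_tensor_bijective {M M' : Type} [Field k] [Ring A] [Algebra k A]
    (𝒜 : ℤ → Submodule k A) [GradedAlgebra 𝒜]
    (hneg : ∀ n : ℤ, n < 0 → 𝒜 n = ⊥) (hconn : 𝒜 0 = (1 : Submodule k A))
    [AddCommGroup M] [Module k M] [Module A M] [IsScalarTower k A M]
    [AddCommGroup M'] [Module k M'] [Module A M'] [IsScalarTower k A M']
    (ℳ : ℤ → Submodule k M) [DirectSum.Decomposition ℳ] [SetLike.GradedSMul 𝒜 ℳ]
    (ℳ' : ℤ → Submodule k M') [DirectSum.Decomposition ℳ'] [SetLike.GradedSMul 𝒜 ℳ']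
    (f : M →ₗ[A] M') (hf : ∀ (n : ℤ) (x : M), x ∈ ℳ n → f x ∈ ℳ' n)
    (hM' : ∃ n₀ : ℤ, ∀ n : ℤ, n < n₀ → ℳ' n = ⊥) :
    ((Function.Surjective f ∧ IsEssential 𝒜 ℳ f) →
      (Submodule.comap (f.restrictScalars k) (posSMul (⨆ n > (0:ℤ), 𝒜 n) M')
          = posSMul (⨆ n > (0:ℤ), 𝒜 n) M ∧
        posSMul (⨆ n > (0:ℤ), 𝒜 n) M' ⊔ LinearMap.range (f.restrictScalars k) = ⊤)) ∧
    ((∃ n₀ : ℤ, ∀ n : ℤ, n < n₀ → ℳ n = ⊥) →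
      (Submodule.comap (f.restrictScalars k) (posSMul (⨆ n > (0:ℤ), 𝒜 n) M')
          = posSMul (⨆ n > (0:ℤ), 𝒜 n) M ∧
        posSMul (⨆ n > (0:ℤ), 𝒜 n) M' ⊔ LinearMap.range (f.restrictScalars k) = ⊤) →
      (Function.Surjective f ∧ IsEssential 𝒜 ℳ f)) := by
  refine ⟨fun ⟨hsurj, hess⟩ => ⟨?_, ?_⟩, fun ⟨n₀, hM⟩ ⟨hcomap, hsup⟩ => ⟨?_, ?_⟩⟩
  · rw [← map_posSMul_of_surjective _ hsurj, Submodule.comap_map_eq,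
      sup_eq_left.2 (hess.ker_le_posSMul 𝒜 ℳ hneg hconn ℳ' hf hsurj)]
  · rw [(LinearMap.range_eq_top (f := f.restrictScalars k)).2 hsurj, sup_top_eq]
  · obtain ⟨n₀', hM'⟩ := hM'
    exact LinearMap.range_eq_top.1 <|
      eq_top_of_posSMul_sup_eq_top 𝒜 ℳ' hM' (isHomogeneous_range ℳ' ℳ f hf) hsup
  · refine isEssential_of_ker_le_posSMul 𝒜 ℳ hM ?_
    rw [← hcomap]
    exact Submodule.comap_mono bot_le

end Stmt1
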